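/- Let p and e be primes with p > 2 and e > 2, and let H = H(F_{p^e}) be the Heisenberg group with commutator subgroup H'. (i) For every subgroup N ≤ H' with |H : N| = p^{2e+2}, there exist linearly independent e×e matrices L_1, L_2 over Z_p with L_1 invertible and the minimal polynomial of L_1^{−1}L_2 irreducible of degree e, such that H/N is isomorphic to B(L_1, L_2). (ii) Conversely, for any linearly independent e×e matrices L_1, L_2 over Z_p with L_1 invertible and the minimal polynomial of L_1^{−1}L_2 irreducible of degree e, the group B(L_1, L_2) is isomorphic to H/N for some subgroup N ≤ H' with |H : N| = p^{2e+2}. -/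

import Mathlib

/-- The Heisenberg group over a field `K`: underlying set `K × K × K` with
multiplication `(α,β,γ)·(α',β',γ') = (α+α', β+β', γ+γ'+α·β')`. -/
def Heisenberg (K : Type) [Field K] : Type := K × K × K

namespace Heisenberg

variable {K : Type} [Field K]

instance : Mul (Heisenberg K) :=
  ⟨fun a b => (a.1 + b.1, a.2.1 + b.2.1, a.2.2 + b.2.2 + a.1 * b.2.1)⟩

instance : One (Heisenberg K) := ⟨((0 : K), (0 : K), (0 : K))⟩

instance : Inv (Heisenberg K) :=
  ⟨fun a => (-a.1, -a.2.1, -a.2.2 + a.1 * a.2.1)⟩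

lemma mul_def (a b : Heisenberg K) :
    a * b = (a.1 + b.1, a.2.1 + b.2.1, a.2.2 + b.2.2 + a.1 * b.2.1) := rfl

lemma one_def : (1 : Heisenberg K) = ((0 : K), (0 : K), (0 : K)) := rfl

lemma inv_def (a : Heisenberg K) : a⁻¹ = (-a.1, -a.2.1, -a.2.2 + a.1 * a.2.1) := rfl

instance : Group (Heisenberg K) where
  mul := (· * ·)
  one := 1
  inv := (·⁻¹)
  mul_assoc a b c := by
    show (a * b) * c = a * (b * c)
    simp only [mul_def]
    refine Prod.ext ?_ (Prod.ext ?_ ?_) <;> dsimp [HMul.hMul, Mul.mul, One.one, Inv.inv] <;>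
      (try simp only [show ∀ x y : K, Mul.mul x y = x * y from fun _ _ => rfl]) <;> ring
  one_mul a := by
    show 1 * a = a
    simp only [mul_def, one_def]
    refine Prod.ext ?_ (Prod.ext ?_ ?_) <;> dsimp [HMul.hMul, Mul.mul, One.one, Inv.inv] <;>
      (try simp only [show ∀ x y : K, Mul.mul x y = x * y from fun _ _ => rfl]) <;> ring
  mul_one a := by
    show a * 1 = a
    simp only [mul_def, one_def]
    refine Prod.ext ?_ (Prod.ext ?_ ?_) <;> dsimp [HMul.hMul, Mul.mul, One.one, Inv.inv] <;>
      (try simp only [show ∀ x y : K, Mul.mul x y = x * y from fun _ _ => rfl]) <;> ring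
  inv_mul_cancel a := by
    show a⁻¹ * a = 1
    simp only [mul_def, one_def, inv_def]
    refine Prod.ext ?_ (Prod.ext ?_ ?_) <;> dsimp [HMul.hMul, Mul.mul, One.one, Inv.inv] <;>
      (try simp only [show ∀ x y : K, Mul.mul x y = x * y from fun _ _ => rfl]) <;> ring

instance [Finite K] : Finite (Heisenberg K) := inferInstanceAs (Finite (K × K × K))

end Heisenberg

open Matrix in
/-- The Brahana-Baer group `B(L 0, …, L (t-1))` determined by a family of `r × s`
matrices over `ZMod p`: underlying set `(ZMod p)^r × (ZMod p)^s × (ZMod p)^t` with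
multiplication `(a,b,c)·(a',b',c') = (a+a', b+b', c+c'+(a L₁ b'ᵀ, …, a L_t b'ᵀ))`. -/
def BGroup (p r s t : ℕ) (L : Fin t → Matrix (Fin r) (Fin s) (ZMod p)) : Type :=
  (Fin r → ZMod p) × (Fin s → ZMod p) × (Fin t → ZMod p)

namespace BGroup

open Matrix

variable {p r s t : ℕ} {L : Fin t → Matrix (Fin r) (Fin s) (ZMod p)}

instance : Mul (BGroup p r s t L) :=
  ⟨fun x y => (x.1 + y.1, x.2.1 + y.2.1,
    fun i => x.2.2 i + y.2.2 i + x.1 ⬝ᵥ (L i).mulVec y.2.1)⟩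

instance : One (BGroup p r s t L) := ⟨(0, 0, 0)⟩

instance : Inv (BGroup p r s t L) :=
  ⟨fun x => (-x.1, -x.2.1, fun i => -x.2.2 i + x.1 ⬝ᵥ (L i).mulVec x.2.1)⟩

lemma mul_def (x y : BGroup p r s t L) :
    x * y = (x.1 + y.1, x.2.1 + y.2.1,
      fun i => x.2.2 i + y.2.2 i + x.1 ⬝ᵥ (L i).mulVec y.2.1) := rfl

lemma one_def : (1 : BGroup p r s t L) = (0, 0, 0) := rfl

lemma inv_def (x : BGroup p r s t L) :
    x⁻¹ = (-x.1, -x.2.1, fun i => -x.2.2 i + x.1 ⬝ᵥ (L i).mulVec x.2.1) := rfl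

instance : Group (BGroup p r s t L) where
  mul := (· * ·)
  one := 1
  inv := (·⁻¹)
  mul_assoc x y z := by
    show (x * y) * z = x * (y * z)
    simp only [mul_def]
    refine Prod.ext ?_ (Prod.ext ?_ ?_) <;> dsimp [HMul.hMul, Mul.mul, One.one, Inv.inv]
    · abel
    · abel
    · funext i
      simp [Matrix.mulVec_add, dotProduct_add, add_dotProduct]
      ring
  one_mul x := by
    show 1 * x = x
    simp only [mul_def, one_def]
    refine Prod.ext ?_ (Prod.ext ?_ ?_) <;> dsimp [HMul.hMul, Mul.mul, One.one, Inv.inv]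
    · abel
    · abel
    · funext i
      simp [zero_dotProduct]
  mul_one x := by
    show x * 1 = x
    simp only [mul_def, one_def]
    refine Prod.ext ?_ (Prod.ext ?_ ?_) <;> dsimp [HMul.hMul, Mul.mul, One.one, Inv.inv]
    · abel
    · abel
    · funext i
      simp [Matrix.mulVec_zero]
  inv_mul_cancel x := by
    show x⁻¹ * x = 1
    simp only [mul_def, one_def, inv_def]
    refine Prod.ext ?_ (Prod.ext ?_ ?_) <;> dsimp [HMul.hMul, Mul.mul, One.one, Inv.inv]
    · abel
    · abel
    · funext i
      simp [neg_dotProduct]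

instance [NeZero p] : Finite (BGroup p r s t L) :=
  inferInstanceAs (Finite (_ × _ × _))

end BGroup

/-!
A subgroup `N ≤ H'` is `{(0, 0, γ) : γ ∈ W}` for an `𝔽_p`-subspace `W` of `K`. Given a surjection
`λ : K → 𝔽_p^t` and linear bijections `σ, τ : K → 𝔽_p^e` with `λ (α β) = (σ α L_i (τ β))_i`, the map
`(α, β, γ) ↦ (σ α, τ β, λ γ)` is a homomorphism from `H` onto `B(L_1, …, L_t)` with kernel
`{(0, 0, γ) : λ γ = 0}`, and the index of that kernel is `p^(2e+t)`.

For `N` given, take `λ` with kernel `W` (so `t = 2`), `σ = τ` the coordinates in a basis of `K`,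
and `L_i` the Gram matrices of the forms `(x, y) ↦ λ_i (x y)`. These forms are nondegenerate, so
`λ_2 = λ_1 (θ ·)` for some `θ ∈ K`, whence `L_1⁻¹ L_2` is the matrix of multiplication by `θ`;
`θ ∉ 𝔽_p` since `λ_1, λ_2` are independent, and `e` prime forces `𝔽_p(θ) = K`.

Conversely, `K ≅ 𝔽_p[X]/(f)` for `f` the minimal polynomial of `A = L_1⁻¹ L_2`, which yields an
embedding `Φ : K → M_e(𝔽_p)` with `Φ θ = A`. Then `τ γ = Φ γ w`, `σ γ = w Φ γ L_1⁻¹` and the matrix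
coefficients `λ_1 γ = w Φ γ w`, `λ_2 γ = λ_1 (θ γ)` satisfy the identity above.
-/

open Matrix Module

namespace Heisenberg

variable {K : Type} [Field K]

def mk (a b c : K) : Heisenberg K := (a, b, c)

lemma mk_mul_mk (a b c a' b' c' : K) :
    mk a b c * mk a' b' c' = mk (a + a') (b + b') (c + c' + a * b') := rfl

lemma inv_mk (a b c : K) : (mk a b c)⁻¹ = mk (-a) (-b) (-c + a * b) := rfl

lemma ext {x y : Heisenberg K} (h₁ : x.1 = y.1) (h₂ : x.2.1 = y.2.1) (h₃ : x.2.2 = y.2.2) :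
    x = y :=
  Prod.ext h₁ (Prod.ext h₂ h₃)

def ofCenter : Multiplicative K →* Heisenberg K where
  toFun γ := mk 0 0 γ.toAdd
  map_one' := rfl
  map_mul' a b := by
    rw [mk_mul_mk]
    congr 1 <;> simp

lemma ofCenter_apply (γ : Multiplicative K) : ofCenter γ = mk 0 0 γ.toAdd := rfl

def proj : Heisenberg K →* Multiplicative (K × K) where
  toFun x := .ofAdd (x.1, x.2.1)
  map_one' := rfl
  map_mul' _ _ := rfl

open scoped commutatorElement in
lemma commutator_eq_range_ofCenter : commutator (Heisenberg K) = (ofCenter (K := K)).range := by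
  apply le_antisymm
  · intro x hx
    have h : (x.1, x.2.1) = (0 : K × K) :=
      MonoidHom.mem_ker.mp (Abelianization.commutator_subset_ker proj hx)
    rw [Prod.mk_eq_zero] at h
    exact ⟨.ofAdd x.2.2, ext h.1.symm h.2.symm rfl⟩
  · rintro _ ⟨γ, rfl⟩
    have h : ofCenter γ = ⁅(mk 1 0 0 : Heisenberg K), mk 0 γ.toAdd 0⁆ := by
      rw [commutatorElement_def, ofCenter_apply, mk_mul_mk, inv_mk, mk_mul_mk, inv_mk, mk_mul_mk]
      congr 1 <;> ring
    rw [h, commutator_def]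
    exact Subgroup.commutator_mem_commutator (Subgroup.mem_top _) (Subgroup.mem_top _)

def centralSubgroup (W : AddSubgroup K) : Subgroup (Heisenberg K) :=
  (AddSubgroup.toSubgroup W).map ofCenter

lemma mem_centralSubgroup {W : AddSubgroup K} {x : Heisenberg K} :
    x ∈ centralSubgroup W ↔ x.1 = 0 ∧ x.2.1 = 0 ∧ x.2.2 ∈ W := by
  constructor
  · rintro ⟨γ, hγ, rfl⟩
    exact ⟨rfl, rfl, hγ⟩
  · rintro ⟨h1, h2, h3⟩
    exact ⟨.ofAdd x.2.2, h3, ext h1.symm h2.symm rfl⟩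

lemma centralSubgroup_le_commutator (W : AddSubgroup K) :
    centralSubgroup W ≤ commutator (Heisenberg K) := by
  rw [commutator_eq_range_ofCenter]
  exact Subgroup.map_le_range _ _

lemma exists_eq_centralSubgroup {N : Subgroup (Heisenberg K)}
    (hN : N ≤ commutator (Heisenberg K)) : ∃ W, N = centralSubgroup W := by
  rw [commutator_eq_range_ofCenter] at hN
  exact ⟨Subgroup.toAddSubgroup' (N.comap ofCenter), (Subgroup.map_comap_eq_self hN).symm⟩

end Heisenberg

namespace BGroup

variable {p r s t : ℕ} {L : Fin t → Matrix (Fin r) (Fin s) (ZMod p)}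

lemma natCard [NeZero p] : Nat.card (BGroup p r s t L) = p ^ (r + s + t) := by
  change Nat.card ((Fin r → ZMod p) × (Fin s → ZMod p) × (Fin t → ZMod p)) = _
  simp [pow_add, mul_assoc]

end BGroup

section ToBGroup

variable {p r s t : ℕ} {L : Fin t → Matrix (Fin r) (Fin s) (ZMod p)}
  {K : Type} [Field K] [Algebra (ZMod p) K]
  (σ : K →ₗ[ZMod p] Fin r → ZMod p) (τ : K →ₗ[ZMod p] Fin s → ZMod p)
  (lam : K →ₗ[ZMod p] Fin t → ZMod p)

def Heisenberg.toBGroup (h : ∀ α β i, lam (α * β) i = σ α ⬝ᵥ L i *ᵥ τ β) :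
    Heisenberg K →* BGroup p r s t L where
  toFun x := (σ x.1, τ x.2.1, lam x.2.2)
  map_one' := by
    change ((σ 0, τ 0, lam 0) : BGroup p r s t L) = (0, 0, 0)
    simp only [map_zero]
  map_mul' x y := by
    refine .trans ?_ (BGroup.mul_def _ _).symm
    refine Prod.ext (map_add σ x.1 y.1) (Prod.ext (map_add τ x.2.1 y.2.1) (funext fun i => ?_))
    change lam (x.2.2 + y.2.2 + x.1 * y.2.1) i = _
    simp only [map_add, Pi.add_apply, h]

variable {σ τ lam}
variable (h : ∀ α β i, lam (α * β) i = σ α ⬝ᵥ L i *ᵥ τ β)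

lemma Heisenberg.toBGroup_surjective (hσ : Function.Surjective σ)
    (hτ : Function.Surjective τ) (hlam : Function.Surjective lam) :
    Function.Surjective (Heisenberg.toBGroup σ τ lam h) := by
  rintro ⟨a, b, c⟩
  obtain ⟨α, rfl⟩ := hσ a
  obtain ⟨β, rfl⟩ := hτ b
  obtain ⟨γ, rfl⟩ := hlam c
  exact ⟨Heisenberg.mk α β γ, rfl⟩

lemma Heisenberg.ker_toBGroup (hσ : Function.Injective σ) (hτ : Function.Injective τ) :
    (Heisenberg.toBGroup σ τ lam h).ker =
      Heisenberg.centralSubgroup (LinearMap.ker lam).toAddSubgroup := by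
  ext x
  rw [MonoidHom.mem_ker, Heisenberg.mem_centralSubgroup]
  change ((σ x.1, τ x.2.1, lam x.2.2) : BGroup p r s t L) = (0, 0, 0) ↔ _
  simp only [Prod.mk.injEq, map_eq_zero_iff _ hσ, map_eq_zero_iff _ hτ]
  rfl

end ToBGroup

theorem LinearMap.surjective_pi_iff_linearIndependent {ι F V : Type*} [Finite ι] [Field F]
    [AddCommGroup V] [Module F V] (f : ι → V →ₗ[F] F) :
    Function.Surjective (LinearMap.pi f) ↔ LinearIndependent F f := by
  rw [← LinearMap.range_eq_top, ← Submodule.span_eq (LinearMap.range (LinearMap.pi f)),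
    LinearMap.coe_range, ← (LinearMap.ltoFun F V F F).linearIndependent_iff (ker_eq_bot.mpr
      DFunLike.coe_injective)]
  exact span_flip_eq_top_iff_linearIndependent

theorem Submodule.exists_surjective_ker_eq {F V : Type*} [Field F] [AddCommGroup V] [Module F V]
    [FiniteDimensional F V] (W : Submodule F V) :
    ∃ (t : ℕ) (f : V →ₗ[F] Fin t → F), Function.Surjective f ∧ LinearMap.ker f = W :=
  ⟨_, (finBasis F (V ⧸ W)).equivFun.toLinearMap ∘ₗ W.mkQ,
    by simpa using (finBasis F (V ⧸ W)).equivFun.surjective.comp W.mkQ_surjective,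
    by rw [LinearEquiv.ker_comp, ker_mkQ]⟩

section FieldExtension

variable {F K : Type*} [Field F] [Field K] [Algebra F K]

lemma Module.Dual.comp_mulLeft_eq_zero_iff {lam : Module.Dual F K} (hlam : lam ≠ 0) {x : K} :
    lam ∘ₗ LinearMap.mulLeft F x = 0 ↔ x = 0 := by
  refine ⟨fun h => by_contra fun hx => hlam (LinearMap.ext fun y => ?_), fun h => by simp [h]⟩
  simpa [mul_inv_cancel_left₀ hx] using LinearMap.congr_fun h (x⁻¹ * y)

lemma Module.Dual.exists_eq_comp_mulLeft [FiniteDimensional F K] {lam : Module.Dual F K}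
    (hlam : lam ≠ 0) (mu : Module.Dual F K) : ∃ θ, mu = lam ∘ₗ LinearMap.mulLeft F θ := by
  let B := (LinearMap.mul F K).compr₂ lam
  have hB : Function.Injective B := by
    rw [← LinearMap.ker_eq_bot, LinearMap.ker_eq_bot']
    exact fun x hx => (comp_mulLeft_eq_zero_iff hlam).mp hx
  obtain ⟨θ, hθ⟩ := (LinearMap.injective_iff_surjective_of_finrank_eq_finrank
    Subspace.dual_finrank_eq.symm).mp hB mu
  exact ⟨θ, hθ.symm⟩

lemma Module.Dual.linearIndependent_comp_mulLeft_iff {lam : Module.Dual F K} (hlam : lam ≠ 0)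
    {θ : K} :
    LinearIndependent F ![lam, lam ∘ₗ LinearMap.mulLeft F θ] ↔ θ ∉ (algebraMap F K).range := by
  have hcomb (a b : F) : a • lam + b • (lam ∘ₗ LinearMap.mulLeft F θ) =
      lam ∘ₗ LinearMap.mulLeft F (algebraMap F K a + b • θ) := by
    ext y
    simp [add_mul, ← Algebra.smul_def]
  rw [LinearIndependent.pair_iff]
  constructor
  · rintro h ⟨c, rfl⟩
    have := h c (-1) (by rw [hcomb, Algebra.smul_def]; simp)
    exact one_ne_zero (neg_eq_zero.mp this.2)
  · intro hθ a b hab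
    rw [hcomb, comp_mulLeft_eq_zero_iff hlam] at hab
    obtain rfl : b = 0 := by
      by_contra hb
      refine hθ ⟨-(b⁻¹ * a), ?_⟩
      rw [map_neg, map_mul, ← Algebra.smul_def, ← smul_neg, ← eq_neg_of_add_eq_zero_right hab,
        smul_smul, inv_mul_cancel₀ hb, one_smul]
    simpa using hab

lemma minpoly.natDegree_eq_finrank_of_notMem_range [FiniteDimensional F K]
    (hK : (finrank F K).Prime) {θ : K} (hθ : θ ∉ (algebraMap F K).range) :
    (minpoly F θ).natDegree = finrank F K :=
  (hK.eq_one_or_self_of_dvd _ (minpoly.degree_dvd (.of_finite F θ))).resolve_left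
    (mt minpoly.natDegree_eq_one_iff.mp hθ)

end FieldExtension

section MulGram

variable {F K ι : Type*} [Field F] [Field K] [Algebra F K] [Fintype ι] [DecidableEq ι]
  (b : Basis ι F K)

noncomputable def mulGram : Module.Dual F K →ₗ[F] Matrix ι ι F where
  toFun lam := LinearMap.toMatrix₂ b b ((LinearMap.mul F K).compr₂ lam)
  map_add' _ _ := by ext; simp
  map_smul' _ _ := by ext; simp

lemma apply_mul_eq_dotProduct_mulGram (lam : Module.Dual F K) (x y : K) :
    lam (x * y) = b.equivFun x ⬝ᵥ mulGram b lam *ᵥ b.equivFun y :=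
  apply_eq_dotProduct_toMatrix₂_mulVec b b ((LinearMap.mul F K).compr₂ lam) x y

lemma mulGram_injective : Function.Injective (mulGram b) := by
  rw [← LinearMap.ker_eq_bot, LinearMap.ker_eq_bot']
  intro lam h
  ext x
  simpa [h] using apply_mul_eq_dotProduct_mulGram b lam x 1

lemma isUnit_mulGram {lam : Module.Dual F K} (hlam : lam ≠ 0) : IsUnit (mulGram b lam) := by
  rw [Matrix.isUnit_iff_isUnit_det, isUnit_iff_ne_zero]
  refine (LinearMap.separatingLeft_iff_det_ne_zero b).mp fun x hx => ?_
  exact (Module.Dual.comp_mulLeft_eq_zero_iff hlam).mp (LinearMap.ext hx)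

lemma mulGram_comp_mulLeft (lam : Module.Dual F K) (θ : K) :
    mulGram b (lam ∘ₗ LinearMap.mulLeft F θ) = mulGram b lam * Algebra.leftMulMatrix b θ := by
  have h : (LinearMap.mul F K).compr₂ (lam ∘ₗ LinearMap.mulLeft F θ) =
      ((LinearMap.mul F K).compr₂ lam).compl₂ (LinearMap.mulLeft F θ) := by
    ext x y
    simp [mul_left_comm]
  simp only [mulGram, LinearMap.coe_mk, AddHom.coe_mk, h, LinearMap.toMatrix₂_compl₂ b b,
    Algebra.leftMulMatrix_apply]
  rfl

end MulGram

theorem minpoly_inv_mulGram_mul_mulGram {F K ι : Type*} [Field F] [Field K] [Algebra F K]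
    [Fintype ι] [DecidableEq ι] (b : Basis ι F K) (hK : (finrank F K).Prime)
    {v : Fin 2 → Module.Dual F K} (hv : LinearIndependent F v) :
    Irreducible (minpoly F ((mulGram b (v 0))⁻¹ * mulGram b (v 1))) ∧
      (minpoly F ((mulGram b (v 0))⁻¹ * mulGram b (v 1))).natDegree = finrank F K := by
  have : FiniteDimensional F K := b.finiteDimensional_of_finite
  have h0 := hv.ne_zero 0
  obtain ⟨θ, hθ⟩ := Module.Dual.exists_eq_comp_mulLeft h0 (v 1)
  have hθF : θ ∉ (algebraMap F K).range := by
    rw [← Module.Dual.linearIndependent_comp_mulLeft_iff h0, ← hθ]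
    exact (FinVec.etaExpand_eq v).symm ▸ hv
  have hunit := isUnit_mulGram b h0
  rw [hθ, mulGram_comp_mulLeft,
    nonsing_inv_mul_cancel_left _ _ ((isUnit_iff_isUnit_det _).mp hunit),
    minpoly.algHom_eq _ (Algebra.leftMulMatrix_injective b)]
  exact ⟨minpoly.irreducible (.of_finite F θ),
    minpoly.natDegree_eq_finrank_of_notMem_range hK hθF⟩

theorem exists_algHom_matrix_apply_eq {F K n : Type*} [Field F] [Field K] [Algebra F K] [Finite K]
    [Fintype n] [DecidableEq n] {A : Matrix n n F} (hA : Irreducible (minpoly F A))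
    (hdeg : (minpoly F A).natDegree = finrank F K) :
    ∃ (Φ : K →ₐ[F] Matrix n n F) (θ : K), Φ θ = A := by
  have : Fact (Irreducible (minpoly F A)) := ⟨hA⟩
  let pb := AdjoinRoot.powerBasis hA.ne_zero
  have : Module.Finite F (AdjoinRoot (minpoly F A)) := pb.finite
  have hrank : finrank F (AdjoinRoot (minpoly F A)) = finrank F K := by
    rw [pb.finrank, AdjoinRoot.powerBasis_dim, hdeg]
  obtain ⟨g⟩ := FiniteField.nonempty_algHom_of_finrank_dvd hrank.dvd
  let ε : AdjoinRoot (minpoly F A) ≃ₐ[F] K := AlgEquiv.ofBijective g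
    ⟨g.injective, (LinearMap.injective_iff_surjective_of_finrank_eq_finrank (f := g.toLinearMap)
      hrank).mp g.injective⟩
  let Ψ : AdjoinRoot (minpoly F A) →ₐ[F] Matrix n n F :=
    Ideal.Quotient.liftₐ _ (Polynomial.aeval A) fun P hP => by
      obtain ⟨Q, rfl⟩ := Ideal.mem_span_singleton'.mp hP
      simp
  refine ⟨Ψ.comp ε.symm.toAlgHom, ε (AdjoinRoot.root _), ?_⟩
  change Ψ (ε.symm (ε (AdjoinRoot.root _))) = A
  rw [ε.symm_apply_apply]
  exact Polynomial.aeval_X A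

section MatrixCoefficients

variable {F K n : Type*} [Field F] [Field K] [Algebra F K] [Fintype n] [DecidableEq n]
  (Φ : K →ₐ[F] Matrix n n F)

def orbitMap (w : n → F) : K →ₗ[F] n → F where
  toFun γ := Φ γ *ᵥ w
  map_add' _ _ := by simp [add_mulVec]
  map_smul' _ _ := by simp [smul_mulVec]

def coorbitMap (u : n → F) : K →ₗ[F] n → F where
  toFun γ := u ᵥ* Φ γ
  map_add' _ _ := by simp [vecMul_add]
  map_smul' _ _ := by simp [vecMul_smul]

def matrixCoeff (u w : n → F) : Module.Dual F K where
  toFun γ := u ⬝ᵥ Φ γ *ᵥ w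
  map_add' _ _ := by simp [add_mulVec, dotProduct_add]
  map_smul' _ _ := by simp [smul_mulVec]

variable {Φ}

lemma matrixCoeff_mul_mul (u w : n → F) (α x β : K) :
    matrixCoeff Φ u w (α * x * β) = coorbitMap Φ u α ⬝ᵥ Φ x *ᵥ orbitMap Φ w β := by
  change u ⬝ᵥ Φ (α * x * β) *ᵥ w = u ᵥ* Φ α ⬝ᵥ Φ x *ᵥ (Φ β *ᵥ w)
  rw [map_mul, map_mul, ← dotProduct_mulVec, mulVec_mulVec, mulVec_mulVec]

lemma orbitMap_injective {w : n → F} (hw : w ≠ 0) : Function.Injective (orbitMap Φ w) := by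
  rw [← LinearMap.ker_eq_bot, LinearMap.ker_eq_bot']
  refine fun γ hγ => by_contra fun hγ0 => hw ?_
  change Φ γ *ᵥ w = 0 at hγ
  rw [← one_mulVec w, ← map_one Φ, ← inv_mul_cancel₀ hγ0, map_mul, ← mulVec_mulVec, hγ,
    mulVec_zero]

lemma coorbitMap_injective {u : n → F} (hu : u ≠ 0) : Function.Injective (coorbitMap Φ u) := by
  rw [← LinearMap.ker_eq_bot, LinearMap.ker_eq_bot']
  refine fun γ hγ => by_contra fun hγ0 => hu ?_
  change u ᵥ* Φ γ = 0 at hγ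
  rw [← vecMul_one u, ← map_one Φ, ← mul_inv_cancel₀ hγ0, map_mul, ← vecMul_vecMul, hγ,
    zero_vecMul]

end MatrixCoefficients

theorem exists_bilinear_repr_of_algHom {F K n : Type*} [Field F] [Field K] [Algebra F K]
    [Fintype n] [DecidableEq n] [Nonempty n] (hK : finrank F K = Fintype.card n)
    (Φ : K →ₐ[F] Matrix n n F) {θ : K} (hθ : θ ∉ (algebraMap F K).range) {L : Matrix n n F}
    (hL : IsUnit L) :
    ∃ (σ τ : K →ₗ[F] n → F) (lam : K →ₗ[F] Fin 2 → F),
      Function.Bijective σ ∧ Function.Bijective τ ∧ Function.Surjective lam ∧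
      ∀ α β i, lam (α * β) i = σ α ⬝ᵥ ![L, L * Φ θ] i *ᵥ τ β := by
  have : FiniteDimensional F K := Module.finite_of_finrank_pos (hK ▸ Fintype.card_pos)
  have hbij {f : K →ₗ[F] n → F} (hf : Function.Injective f) : Function.Bijective f :=
    ⟨hf, (LinearMap.injective_iff_surjective_of_finrank_eq_finrank (by simp [hK])).mp hf⟩
  obtain ⟨i⟩ := ‹Nonempty n›
  let w : n → F := Pi.single i 1
  have hw : w ≠ 0 := by simp [w]
  let c := matrixCoeff Φ w w
  -- `c 1 = w ⬝ᵥ w = 1`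
  have hc : c ≠ 0 := fun h => by simpa [c, w, matrixCoeff] using LinearMap.congr_fun h 1
  refine ⟨L⁻¹.vecMulLinear ∘ₗ coorbitMap Φ w, orbitMap Φ w,
    LinearMap.pi ![c, c ∘ₗ LinearMap.mulLeft F θ],
    hbij ((vecMul_injective_of_isUnit (isUnit_nonsing_inv_iff.mpr hL)).comp
      (coorbitMap_injective hw)),
    hbij (orbitMap_injective hw),
    (LinearMap.surjective_pi_iff_linearIndependent _).mpr
      ((Module.Dual.linearIndependent_comp_mulLeft_iff hc).mpr hθ),
    fun α β j => ?_⟩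
  have key (x : K) : c (x * (α * β)) =
      (coorbitMap Φ w α ᵥ* L⁻¹) ⬝ᵥ (L * Φ x) *ᵥ orbitMap Φ w β := by
    rw [show x * (α * β) = α * x * β by ring, matrixCoeff_mul_mul, ← dotProduct_mulVec,
      mulVec_mulVec, nonsing_inv_mul_cancel_left _ _ ((isUnit_iff_isUnit_det _).mp hL)]
  fin_cases j
  · simpa using key 1
  · exact key θ

section Directions

variable {p e : ℕ} [Fact p.Prime] {K : Type} [Field K] [Finite K] [Algebra (ZMod p) K]

theorem Heisenberg.exists_mulEquiv_bgroup_of_le_commutator (he : e.Prime)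
    (hK : finrank (ZMod p) K = e) (N : Subgroup (Heisenberg K)) [N.Normal]
    (hN : N ≤ commutator (Heisenberg K)) (hidx : N.index = p ^ (2 * e + 2)) :
    ∃ L₁ L₂ : Matrix (Fin e) (Fin e) (ZMod p),
      LinearIndependent (ZMod p) ![L₁, L₂] ∧ IsUnit L₁ ∧
      Irreducible (minpoly (ZMod p) (L₁⁻¹ * L₂)) ∧
      (minpoly (ZMod p) (L₁⁻¹ * L₂)).natDegree = e ∧
      Nonempty ((Heisenberg K ⧸ N) ≃* BGroup p e e 2 ![L₁, L₂]) := by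
  obtain ⟨W, rfl⟩ := exists_eq_centralSubgroup hN
  obtain ⟨t, lam, hlam, hker⟩ := (AddSubgroup.toZModSubmodule p W).exists_surjective_ker_eq
  let b : Basis (Fin e) (ZMod p) K := Module.finBasisOfFinrankEq _ _ hK
  let v i := LinearMap.proj i ∘ₗ lam
  let f := toBGroup (L := mulGram b ∘ v) b.equivFun.toLinearMap b.equivFun.toLinearMap
    lam fun α β i => apply_mul_eq_dotProduct_mulGram b (v i) α β
  have hf : f.ker = centralSubgroup W :=
    (ker_toBGroup _ b.equivFun.injective b.equivFun.injective).trans (by rw [hker]; rfl)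
  let iso := (QuotientGroup.quotientMulEquivOfEq hf.symm).trans
    (QuotientGroup.quotientKerEquivOfSurjective f
      (toBGroup_surjective _ b.equivFun.surjective b.equivFun.surjective hlam))
  obtain rfl : t = 2 := by
    have := (Nat.card_congr iso.toEquiv).trans BGroup.natCard
    rw [← Subgroup.index, hidx] at this
    have := Nat.pow_right_injective (Fact.out : p.Prime).two_le this
    omega
  have hv : LinearIndependent (ZMod p) v :=
    (LinearMap.surjective_pi_iff_linearIndependent v).mp hlam
  obtain ⟨hirr, hdeg⟩ := minpoly_inv_mulGram_mul_mulGram b (hK ▸ he) hv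
  have hL : mulGram b ∘ v = ![mulGram b (v 0), mulGram b (v 1)] := (FinVec.etaExpand_eq _).symm
  refine ⟨_, _, ?_, isUnit_mulGram b (hv.ne_zero 0), hirr, hK ▸ hdeg, ⟨hL ▸ iso⟩⟩
  exact hL ▸ hv.map' _ (LinearMap.ker_eq_bot.mpr (mulGram_injective b))

theorem Heisenberg.exists_le_commutator_mulEquiv_bgroup (he : e.Prime)
    (hK : finrank (ZMod p) K = e) {L₁ L₂ : Matrix (Fin e) (Fin e) (ZMod p)} (hL₁ : IsUnit L₁)
    (hirr : Irreducible (minpoly (ZMod p) (L₁⁻¹ * L₂)))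
    (hdeg : (minpoly (ZMod p) (L₁⁻¹ * L₂)).natDegree = e) :
    ∃ (N : Subgroup (Heisenberg K)) (_ : N.Normal),
      N ≤ commutator (Heisenberg K) ∧ N.index = p ^ (2 * e + 2) ∧
      Nonempty (BGroup p e e 2 ![L₁, L₂] ≃* (Heisenberg K ⧸ N)) := by
  have : Nonempty (Fin e) := ⟨⟨0, he.pos⟩⟩
  obtain ⟨Φ, θ, hθ⟩ := exists_algHom_matrix_apply_eq hirr (hdeg.trans hK.symm)
  have hθF : θ ∉ (algebraMap (ZMod p) K).range := by
    rw [← minpoly.natDegree_eq_one_iff, ← minpoly.algHom_eq Φ Φ.toRingHom.injective, hθ, hdeg]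
    exact he.one_lt.ne'
  have hL₂ : L₁ * Φ θ = L₂ := by
    rw [hθ, mul_nonsing_inv_cancel_left _ _ ((isUnit_iff_isUnit_det _).mp hL₁)]
  obtain ⟨σ, τ, lam, hσ, hτ, hlam, h⟩ :=
    exists_bilinear_repr_of_algHom (hK.trans (Fintype.card_fin e).symm) Φ hθF hL₁
  rw [hL₂] at h
  let iso := QuotientGroup.quotientKerEquivOfSurjective _ (toBGroup_surjective h hσ.2 hτ.2 hlam)
  refine ⟨_, inferInstance, ?_, ?_, ⟨iso.symm⟩⟩
  · rw [ker_toBGroup h hσ.1 hτ.1]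
    exact centralSubgroup_le_commutator _
  · rw [Subgroup.index, Nat.card_congr iso.toEquiv, BGroup.natCard]
    ring_nf

end Directions

theorem heisenberg_quotient_iff_bgroup_genus_two_general
    (p e : ℕ) [Fact p.Prime] (he : e.Prime)
    (K : Type) [Field K] [Fintype K] (hK : Fintype.card K = p ^ e) :
    (∀ (N : Subgroup (Heisenberg K)) (hn : N.Normal),
      N ≤ commutator (Heisenberg K) → N.index = p ^ (2 * e + 2) →
      ∃ L₁ L₂ : Matrix (Fin e) (Fin e) (ZMod p),
        LinearIndependent (ZMod p) ![L₁, L₂] ∧ IsUnit L₁ ∧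
        Irreducible (minpoly (ZMod p) (L₁⁻¹ * L₂)) ∧
        (minpoly (ZMod p) (L₁⁻¹ * L₂)).natDegree = e ∧
        Nonempty ((Heisenberg K ⧸ N) ≃* BGroup p e e 2 ![L₁, L₂])) ∧
    (∀ L₁ L₂ : Matrix (Fin e) (Fin e) (ZMod p),
      LinearIndependent (ZMod p) ![L₁, L₂] → IsUnit L₁ →
      Irreducible (minpoly (ZMod p) (L₁⁻¹ * L₂)) →
      (minpoly (ZMod p) (L₁⁻¹ * L₂)).natDegree = e →
      ∃ (N : Subgroup (Heisenberg K)) (hn : N.Normal),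
        N ≤ commutator (Heisenberg K) ∧ N.index = p ^ (2 * e + 2) ∧
        Nonempty (BGroup p e e 2 ![L₁, L₂] ≃* (Heisenberg K ⧸ N))) := by
  have : CharP K p := charP_of_card_eq_prime_pow hK
  let : Algebra (ZMod p) K := ZMod.algebra K p
  have hrank : finrank (ZMod p) K = e := Nat.pow_right_injective (Fact.out : p.Prime).two_le
    ((FiniteField.pow_finrank_eq_card p K).trans hK)
  exact ⟨fun N _ hN hidx => Heisenberg.exists_mulEquiv_bgroup_of_le_commutator he hrank N hN hidx,
    fun _ _ _ hL₁ hirr hdeg =>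
      Heisenberg.exists_le_commutator_mulEquiv_bgroup he hrank hL₁ hirr hdeg⟩

/-- The quotients of the Heisenberg group `H = H(F_{p^e})` by
subgroups `N ≤ H'` of index `p^(2e+2)` are, up to isomorphism, exactly the groups
`B(L₁, L₂)` where `{L₁, L₂}` is a linearly independent pair of `e × e` matrices
over `Z_p` with `L₁` invertible and `L₁⁻¹L₂` having an irreducible minimal
polynomial of degree `e`. -/
theorem heisenberg_quotient_iff_bgroup_genus_two
    (p e : ℕ) [Fact p.Prime] (he : e.Prime) (hp2 : 2 < p) (he2 : 2 < e)
    (K : Type) [Field K] [Fintype K] (hK : Fintype.card K = p ^ e) :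
    (∀ (N : Subgroup (Heisenberg K)) (hn : N.Normal),
      N ≤ commutator (Heisenberg K) → N.index = p ^ (2 * e + 2) →
      ∃ L₁ L₂ : Matrix (Fin e) (Fin e) (ZMod p),
        LinearIndependent (ZMod p) ![L₁, L₂] ∧ IsUnit L₁ ∧
        Irreducible (minpoly (ZMod p) (L₁⁻¹ * L₂)) ∧
        (minpoly (ZMod p) (L₁⁻¹ * L₂)).natDegree = e ∧
        Nonempty ((Heisenberg K ⧸ N) ≃* BGroup p e e 2 ![L₁, L₂])) ∧
    (∀ L₁ L₂ : Matrix (Fin e) (Fin e) (ZMod p),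
      LinearIndependent (ZMod p) ![L₁, L₂] → IsUnit L₁ →
      Irreducible (minpoly (ZMod p) (L₁⁻¹ * L₂)) →
      (minpoly (ZMod p) (L₁⁻¹ * L₂)).natDegree = e →
      ∃ (N : Subgroup (Heisenberg K)) (hn : N.Normal),
        N ≤ commutator (Heisenberg K) ∧ N.index = p ^ (2 * e + 2) ∧
        Nonempty (BGroup p e e 2 ![L₁, L₂] ≃* (Heisenberg K ⧸ N))) :=
  heisenberg_quotient_iff_bgroup_genus_two_general p e he K hK
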